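/- Ǧ_∞ is a closed subset of T ∗ R(Ω); consequently it is locally compact in the subspace topology. -/
import Mathlib


open TopologicalSpace

variable {T : Type*} [TopologicalSpace T]

/-- `W_{α|n} = ⋂_{k=0}^n V^{(k)}_{α_k}`, the intersection determined by the
first `n+1` entries of the sequence `α`. -/
def Wset (V : ℕ → ℕ → Set T) (α : ℕ → ℕ) (n : ℕ) : Set T :=
  ⋂ k ≤ n, V k (α k)

/-- `α` is a valid index sequence: `α k` indexes a member of the cover `V^{(k)}`. -/
def Bnd (nk : ℕ → ℕ) (α : ℕ → ℕ) : Prop := ∀ k, α k ≤ nk k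

/-- Tail equivalence of index sequences. -/
def TailEq (α β : ℕ → ℕ) : Prop := {k : ℕ | α k ≠ β k}.Finite

/-- Membership `(α,t,β) ∈ Ǧ_∞`: `α ∼ β` and
`t ∈ ⋂_N closure W_{α|N} ∩ ⋂_N closure W_{β|N}`. -/
def InGck (nk : ℕ → ℕ) (V : ℕ → ℕ → Set T) (α : ℕ → ℕ) (t : T) (β : ℕ → ℕ) : Prop :=
  Bnd nk α ∧ Bnd nk β ∧ TailEq α β ∧
    (∀ N, t ∈ closure (Wset V α N)) ∧ (∀ N, t ∈ closure (Wset V β N))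

/-- Pairs of tail-equivalent valid index sequences: the underlying set of the
Glimm groupoid `R(Ω)` for the admissible set `Ω` determined by `nk`. -/
def ROm (nk : ℕ → ℕ) : Type :=
  {p : (ℕ → ℕ) × (ℕ → ℕ) // Bnd nk p.1 ∧ Bnd nk p.2 ∧ TailEq p.1 p.2}

/-- Basic set `O_{(α,β)}(N)` of the Glimm groupoid topology. -/
def OB (nk : ℕ → ℕ) (p : ROm nk) (N : ℕ) : Set (ROm nk) :=
  {q | (∀ k ≤ N, q.1.1 k = p.1.1 k ∧ q.1.2 k = p.1.2 k) ∧
    ∀ k, N < k → q.1.1 k = q.1.2 k}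

/-- The collection of basic sets. -/
def BS (nk : ℕ → ℕ) : Set (Set (ROm nk)) :=
  {s | ∃ (p : ROm nk) (N : ℕ),
    (∀ k, N < k → p.1.1 k = p.1.2 k) ∧ s = OB nk p N}

/-- The Glimm groupoid topology on `R(Ω)`. -/
instance ROmTop (nk : ℕ → ℕ) : TopologicalSpace (ROm nk) :=
  TopologicalSpace.generateFrom (BS nk)

/-- `T ∗ R(Ω)`: an element `(⟨(α,β),_⟩, t)` encodes the triple `(α,t,β)`;
it carries the product topology. -/
abbrev TROm (nk : ℕ → ℕ) (T : Type*) [TopologicalSpace T] : Type _ := ROm nk × T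

/-- `Ǧ_∞` as a subset of `T ∗ R(Ω)`. -/
def GckSet (nk : ℕ → ℕ) (V : ℕ → ℕ → Set T) : Set (TROm nk T) :=
  {x | (∀ N, x.2 ∈ closure (Wset V x.1.1.1 N)) ∧
       (∀ N, x.2 ∈ closure (Wset V x.1.1.2 N))}


open TopologicalSpace

section Aux

variable {nk : ℕ → ℕ}

lemma tail_bound (p : ROm nk) : ∃ M, ∀ k, M < k → p.1.1 k = p.1.2 k := by
  obtain ⟨M, hM⟩ := p.2.2.2.bddAbove
  refine ⟨M, fun k hk => ?_⟩
  by_contra h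
  exact absurd (hM h) (not_le.mpr hk)

lemma self_mem_OB (p : ROm nk) {M : ℕ} (hM : ∀ k, M < k → p.1.1 k = p.1.2 k) :
    p ∈ OB nk p M := ⟨fun k _ => ⟨rfl, rfl⟩, hM⟩

lemma isOpen_OB (p : ROm nk) {M : ℕ} (hM : ∀ k, M < k → p.1.1 k = p.1.2 k) :
    IsOpen (OB nk p M) :=
  TopologicalSpace.GenerateOpen.basic _ ⟨p, M, hM, rfl⟩

lemma isOpen_of_dep {m : ℕ → ℕ} (S : Set (∀ k, Fin (m k))) (L : ℕ)
    (h : ∀ x y, (∀ k, k ≤ L → x k = y k) → x ∈ S → y ∈ S) : IsOpen S := by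
  have hS : S = ⋃ x ∈ S, ⋂ k ∈ Set.Iic L, (fun y : ∀ k, Fin (m k) => y k) ⁻¹' {x k} := by
    ext y
    simp only [Set.mem_iUnion, Set.mem_iInter, Set.mem_preimage, Set.mem_singleton_iff,
      Set.mem_Iic]
    constructor
    · exact fun hy => ⟨y, hy, fun k _ => rfl⟩
    · rintro ⟨x, hx, hxy⟩
      exact h x y (fun k hk => (hxy k hk).symm) hx
  rw [hS]
  refine isOpen_biUnion fun x _ => (Set.finite_Iic L).isOpen_biInter fun k _ => ?_
  exact (continuous_apply k).isOpen_preimage _ (isOpen_discrete _)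

def glue (nk : ℕ → ℕ) (p : ROm nk) (M : ℕ) (x : ∀ k, Fin (nk k + 1)) : ROm nk :=
  ⟨(fun k => if k ≤ M then p.1.1 k else (x k : ℕ),
    fun k => if k ≤ M then p.1.2 k else (x k : ℕ)),
   fun k => by dsimp only; split
               exacts [p.2.1 k, Fin.is_le (x k)],
   fun k => by dsimp only; split
               exacts [p.2.2.1 k, Fin.is_le (x k)],
   Set.Finite.subset (Set.finite_Iic M) (by
     intro k hk
     simp only [Set.mem_setOf_eq] at hk
     by_contra h
     simp only [Set.mem_Iic, not_le] at h
     exact hk (by simp [Nat.not_le.mpr h]))⟩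

lemma glue_fst (p : ROm nk) (M : ℕ) (x : ∀ k, Fin (nk k + 1)) (k : ℕ) :
    (glue nk p M x).1.1 k = if k ≤ M then p.1.1 k else (x k : ℕ) := rfl

lemma glue_snd (p : ROm nk) (M : ℕ) (x : ∀ k, Fin (nk k + 1)) (k : ℕ) :
    (glue nk p M x).1.2 k = if k ≤ M then p.1.2 k else (x k : ℕ) := rfl

lemma glue_continuous (p : ROm nk) (M : ℕ) : Continuous (glue nk p M) := by
  rw [continuous_generateFrom_iff]
  rintro s ⟨p', N', _, rfl⟩
  apply isOpen_of_dep _ N'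
  intro x y hxy hx
  refine ⟨fun k hk => ?_, fun k hk => ?_⟩
  · have h1 := hx.1 k hk
    rw [glue_fst, glue_snd] at h1 ⊢
    by_cases hkM : k ≤ M
    · simpa [hkM] using h1
    · simp only [if_neg hkM] at h1 ⊢
      rw [← hxy k hk]; exact h1
  · have h2 := hx.2 k hk
    rw [glue_fst, glue_snd] at h2 ⊢
    by_cases hkM : k ≤ M
    · simpa [hkM] using h2
    · simp [hkM]

lemma range_glue (p : ROm nk) {M : ℕ} (hM : ∀ k, M < k → p.1.1 k = p.1.2 k) :
    Set.range (glue nk p M) = OB nk p M := by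
  ext q
  constructor
  · rintro ⟨x, rfl⟩
    refine ⟨fun k hk => ?_, fun k hk => ?_⟩
    · rw [glue_fst, glue_snd, if_pos hk, if_pos hk]; exact ⟨rfl, rfl⟩
    · rw [glue_fst, glue_snd, if_neg (Nat.not_le.mpr hk), if_neg (Nat.not_le.mpr hk)]
  · intro hq
    refine ⟨fun k => ⟨q.1.1 k, Nat.lt_succ_of_le (q.2.1 k)⟩, ?_⟩
    apply Subtype.ext
    apply Prod.ext <;> funext k
    · rw [glue_fst]
      by_cases hkM : k ≤ M
      · rw [if_pos hkM, (hq.1 k hkM).1]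
      · rw [if_neg hkM]
    · rw [glue_snd]
      by_cases hkM : k ≤ M
      · rw [if_pos hkM, (hq.1 k hkM).2]
      · rw [if_neg hkM]
        exact hq.2 k (Nat.not_le.mp hkM)

lemma isCompact_OB (p : ROm nk) {M : ℕ} (hM : ∀ k, M < k → p.1.1 k = p.1.2 k) :
    IsCompact (OB nk p M) := by
  rw [← range_glue p hM]
  exact isCompact_range (glue_continuous p M)

lemma exists_OB_subset {U : Set (ROm nk)}
    (hU : TopologicalSpace.GenerateOpen (BS nk) U) :
    ∀ p ∈ U, ∃ M, (∀ k, M < k → p.1.1 k = p.1.2 k) ∧ OB nk p M ⊆ U := by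
  induction hU with
  | basic s hs =>
    rintro p hp
    obtain ⟨p', N', hp', rfl⟩ := hs
    obtain ⟨M0, hM0⟩ := tail_bound p
    refine ⟨max N' M0, fun k hk => hM0 k (lt_of_le_of_lt (le_max_right _ _) hk),
      fun q hq => ⟨fun k hk => ?_, fun k hk => ?_⟩⟩
    · have h := hq.1 k (le_trans hk (le_max_left _ _))
      exact ⟨h.1.trans (hp.1 k hk).1, h.2.trans (hp.1 k hk).2⟩
    · by_cases hkM : max N' M0 < k
      · exact hq.2 k hkM
      · push_neg at hkM
        rw [(hq.1 k hkM).1, (hq.1 k hkM).2]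
        exact hp.2 k hk
  | univ =>
    intro p _
    obtain ⟨M0, hM0⟩ := tail_bound p
    exact ⟨M0, hM0, Set.subset_univ _⟩
  | inter s t _ _ ihs iht =>
    rintro p ⟨hps, hpt⟩
    obtain ⟨M1, hM1, hsub1⟩ := ihs p hps
    obtain ⟨M2, hM2, hsub2⟩ := iht p hpt
    refine ⟨max M1 M2, fun k hk => hM1 k (lt_of_le_of_lt (le_max_left _ _) hk),
      fun q hq => ?_⟩
    have key : ∀ M', M' ≤ max M1 M2 → (∀ k, M' < k → p.1.1 k = p.1.2 k) →
        q ∈ OB nk p M' := by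
      intro M' hle hM'
      refine ⟨fun k hk => hq.1 k (hk.trans hle), fun k hk => ?_⟩
      by_cases h : max M1 M2 < k
      · exact hq.2 k h
      · push_neg at h
        rw [(hq.1 k h).1, (hq.1 k h).2]
        exact hM' k hk
    exact ⟨hsub1 (key M1 (le_max_left _ _) hM1), hsub2 (key M2 (le_max_right _ _) hM2)⟩
  | sUnion S _ ih =>
    rintro p ⟨s, hs, hps⟩
    obtain ⟨M, hM, hsub⟩ := ih s hs p hps
    exact ⟨M, hM, hsub.trans (Set.subset_sUnion_of_mem hs)⟩

lemma ROm_locallyCompact (nk : ℕ → ℕ) : LocallyCompactSpace (ROm nk) := by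
  constructor
  intro x n hn
  obtain ⟨U, hUn, hUopen, hxU⟩ := mem_nhds_iff.mp hn
  obtain ⟨M, hM, hsub⟩ := exists_OB_subset hUopen x hxU
  exact ⟨OB nk x M, (isOpen_OB x hM).mem_nhds (self_mem_OB x hM), hsub.trans hUn,
    isCompact_OB x hM⟩

end Aux

lemma Wset_congr {T : Type*} [TopologicalSpace T] (V : ℕ → ℕ → Set T) {α β : ℕ → ℕ}
    (N : ℕ) (h : ∀ k ≤ N, α k = β k) : Wset V α N = Wset V β N := by
  unfold Wset
  exact Set.iInter₂_congr fun k hk => by rw [h k hk]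

/-- `Ǧ_∞` is a closed subset of `T ∗ R(Ω)`; consequently it is locally compact
in the subspace topology. -/
theorem GckSet_isClosed_locallyCompact
    (nk : ℕ → ℕ) (V : ℕ → ℕ → Set T)
    [CompactSpace T] [T2Space T] [SecondCountableTopology T]
    (hVopen : ∀ k i, i ≤ nk k → IsOpen (V k i))
    (hVcover : ∀ k (t : T), ∃ i ≤ nk k, t ∈ V k i) :
    IsClosed (GckSet nk V) ∧ LocallyCompactSpace ↥(GckSet nk V) := by
  have hclosed : IsClosed (GckSet nk V) := by
    rw [← isOpen_compl_iff, isOpen_iff_mem_nhds]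
    rintro ⟨p, t⟩ hx
    simp only [GckSet, Set.mem_compl_iff, Set.mem_setOf_eq, not_and_or, not_forall] at hx
    obtain ⟨M0, hM0⟩ := tail_bound p
    rcases hx with ⟨N, hN⟩ | ⟨N, hN⟩
    · have hM : ∀ k, max N M0 < k → p.1.1 k = p.1.2 k :=
        fun k hk => hM0 k (lt_of_le_of_lt (le_max_right _ _) hk)
      refine Filter.mem_of_superset
        (prod_mem_nhds ((isOpen_OB p hM).mem_nhds (self_mem_OB p hM))
          (isClosed_closure.isOpen_compl.mem_nhds hN)) ?_
      rintro ⟨q, s⟩ ⟨hq, hs⟩ hmem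
      apply hs
      have := hmem.1 N
      rwa [Wset_congr V N (fun k hk => (hq.1 k (hk.trans (le_max_left _ _))).1)] at this
    · have hM : ∀ k, max N M0 < k → p.1.1 k = p.1.2 k :=
        fun k hk => hM0 k (lt_of_le_of_lt (le_max_right _ _) hk)
      refine Filter.mem_of_superset
        (prod_mem_nhds ((isOpen_OB p hM).mem_nhds (self_mem_OB p hM))
          (isClosed_closure.isOpen_compl.mem_nhds hN)) ?_
      rintro ⟨q, s⟩ ⟨hq, hs⟩ hmem
      apply hs
      have := hmem.2 N
      rwa [Wset_congr V N (fun k hk => (hq.1 k (hk.trans (le_max_left _ _))).2)] at this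
  have : LocallyCompactSpace (ROm nk) := ROm_locallyCompact nk
  exact ⟨hclosed, hclosed.locallyCompactSpace⟩
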